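/- arXiv:2504.17879 — 2 statements merged into one kernel-verified Lean document; each statement's English description precedes it below -/
import Mathlib

section
/- Let $P$ be a sub-probability kernel on a countable set $X$ with density $p(x,y)=P(x,y)/\mu(y)$ satisfying the direct step property: $p(x,y)>0$ for all $x,y$ and $p_2(x,y):=\sum_z p(x,z)p(z,y)\mu(z)\le C_* p(x,y)$ for some $C_*\ge1$. Let $V:X\to(0,\infty)$ with $\inf V>0$, and let $u_n$ be the Feynman--Kac kernels defined by $u_1(x,y)=p(x,y)/V(x)$, $u_{n+1}(x,y)=\sum_z u_n(x,z)\mu(z)u_1(z,y)$. Then for every $n\ge2$ and all $x,y\in X$: $u_n(x,y)\le (2C_*)^{n-2}\frac{1}{V(x)}\sum_{z\in X}p(x,z)p(z,y)\frac{\mu(z)}{V(z)^{n-1}}$. -/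
open scoped ENNReal

/-- The discrete Feynman--Kac kernels `u_n`: `fk p μ V 0` is the Kronecker
delta density `μ(x)⁻¹ 𝟙_{x=y}`, and
`u_{n+1}(x,y) = ∑_z u_n(x,z) μ(z) u₁(z,y)` with `u₁(z,y) = p(z,y)/V(z)`. -/
noncomputable def fk {X : Type*} [DecidableEq X]
    (p : X → X → ℝ≥0∞) (μ V : X → ℝ≥0∞) : ℕ → X → X → ℝ≥0∞
  | 0 => fun x y => if x = y then (μ x)⁻¹ else 0
  | (n + 1) => fun x y => ∑' z, fk p μ V n x z * μ z * (p z y / V z)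

lemma fk_one {X : Type*} [DecidableEq X]
    (p : X → X → ℝ≥0∞) (μ V : X → ℝ≥0∞)
    (hμpos : ∀ x, 0 < μ x) (hμfin : ∀ x, μ x < ∞) (x y : X) :
    fk p μ V 1 x y = p x y / V x := by
  show (∑' z, (if x = z then (μ x)⁻¹ else 0) * μ z * (p z y / V z)) = p x y / V x
  rw [tsum_eq_single x (fun b hb => by rw [if_neg (Ne.symm hb), zero_mul, zero_mul])]
  rw [if_pos rfl, ENNReal.inv_mul_cancel (hμpos x).ne' (hμfin x).ne, one_mul]

/-- upper heat-kernel bound under the direct step property: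
`u_n(x,y) ≤ (2 C_*)^{n-2} V(x)⁻¹ ∑_z p(x,z) p(z,y) μ(z) / V(z)^{n-1}` for `n ≥ 2`. -/
theorem fk_upper_bound
    {X : Type*} [Countable X] [DecidableEq X]
    (P : X → X → ℝ≥0∞) (p : X → X → ℝ≥0∞) (μ V : X → ℝ≥0∞) (Cstar : ℝ≥0∞)
    (hP1 : ∀ x y, P x y ≤ 1) (hPsub : ∀ x, ∑' y, P x y ≤ 1)
    (hμpos : ∀ x, 0 < μ x) (hμfin : ∀ x, μ x < ∞)
    (hpdef : ∀ x y, p x y = P x y / μ y)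
    (hppos : ∀ x y, 0 < p x y)
    (hCstar : 1 ≤ Cstar)
    (hdsp : ∀ x y, (∑' z, p x z * p z y * μ z) ≤ Cstar * p x y)
    (hVm : 0 < ⨅ x, V x) :
    ∀ n : ℕ, 2 ≤ n → ∀ x y,
      fk p μ V n x y
        ≤ (2 * Cstar) ^ (n - 2) * (V x)⁻¹ *
            (∑' z, p x z * p z y * (μ z / (V z) ^ (n - 1))) := by
  intro n hn
  induction n, hn using Nat.le_induction with
  | base =>
    intro x y
    refine le_of_eq ?_
    show (∑' z, fk p μ V 1 x z * μ z * (p z y / V z)) = _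
    norm_num
    rw [← ENNReal.tsum_mul_left]
    refine tsum_congr fun z => ?_
    rw [fk_one p μ V hμpos hμfin]
    simp only [div_eq_mul_inv]
    ring
  | succ n hn IH =>
    intro x y
    set C := (2 * Cstar) ^ (n - 2) * (V x)⁻¹ with hC
    set A : X → X → ℝ≥0∞ := fun z w =>
      (p x z * p z w * μ z) * (p w y * (μ w / V w ^ n)) with hA
    set B : X → X → ℝ≥0∞ := fun z w =>
      (p z w * p w y * μ w) * (p x z * (μ z / V z ^ n)) with hB
    set S : ℝ≥0∞ := ∑' z, p x z * p z y * (μ z / V z ^ n) with hS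
    have hpt : ∀ z w, p x z * p z w * (μ z / V z ^ (n - 1)) * (μ w * (p w y / V w))
        ≤ A z w + B z w := by
      intro z w
      rcases le_total (V w) (V z) with h | h
      · refine le_trans ?_ le_self_add
        have hpow : (V z ^ (n - 1))⁻¹ * (V w)⁻¹ ≤ (V w ^ n)⁻¹ := by
          rw [ENNReal.inv_pow, ENNReal.inv_pow]
          calc (V z)⁻¹ ^ (n - 1) * (V w)⁻¹
              ≤ (V w)⁻¹ ^ (n - 1) * (V w)⁻¹ := by gcongr
            _ = (V w)⁻¹ ^ n := by rw [← pow_succ]; congr 1; omega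
        calc p x z * p z w * (μ z / V z ^ (n - 1)) * (μ w * (p w y / V w))
            = (p x z * p z w * μ z * μ w * p w y) * ((V z ^ (n - 1))⁻¹ * (V w)⁻¹) := by
              simp only [div_eq_mul_inv]; ring
          _ ≤ (p x z * p z w * μ z * μ w * p w y) * (V w ^ n)⁻¹ := by gcongr
          _ = A z w := by simp only [hA, div_eq_mul_inv]; ring
      · refine le_trans ?_ le_add_self
        have hpow : (V z ^ (n - 1))⁻¹ * (V w)⁻¹ ≤ (V z ^ n)⁻¹ := by
          rw [ENNReal.inv_pow, ENNReal.inv_pow]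
          calc (V z)⁻¹ ^ (n - 1) * (V w)⁻¹
              ≤ (V z)⁻¹ ^ (n - 1) * (V z)⁻¹ := by gcongr
            _ = (V z)⁻¹ ^ n := by rw [← pow_succ]; congr 1; omega
        calc p x z * p z w * (μ z / V z ^ (n - 1)) * (μ w * (p w y / V w))
            = (p x z * p z w * μ z * μ w * p w y) * ((V z ^ (n - 1))⁻¹ * (V w)⁻¹) := by
              simp only [div_eq_mul_inv]; ring
          _ ≤ (p x z * p z w * μ z * μ w * p w y) * (V z ^ n)⁻¹ := by gcongr
          _ = B z w := by simp only [hB, div_eq_mul_inv]; ring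
    have hAsum : (∑' w, ∑' z, A z w) ≤ Cstar * S := by
      calc (∑' w, ∑' z, A z w)
          = ∑' w, (∑' z, p x z * p z w * μ z) * (p w y * (μ w / V w ^ n)) := by
            refine tsum_congr fun w => ?_
            rw [ENNReal.tsum_mul_right]
        _ ≤ ∑' w, (Cstar * p x w) * (p w y * (μ w / V w ^ n)) := by
            refine ENNReal.tsum_le_tsum fun w => ?_
            gcongr
            exact hdsp x w
        _ = Cstar * S := by
            rw [hS, ← ENNReal.tsum_mul_left]
            exact tsum_congr fun w => by ring
    have hBsum : (∑' w, ∑' z, B z w) ≤ Cstar * S := by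
      rw [ENNReal.tsum_comm]
      calc (∑' z, ∑' w, B z w)
          = ∑' z, (∑' w, p z w * p w y * μ w) * (p x z * (μ z / V z ^ n)) := by
            refine tsum_congr fun z => ?_
            rw [ENNReal.tsum_mul_right]
        _ ≤ ∑' z, (Cstar * p z y) * (p x z * (μ z / V z ^ n)) := by
            refine ENNReal.tsum_le_tsum fun z => ?_
            gcongr
            exact hdsp z y
        _ = Cstar * S := by
            rw [hS, ← ENNReal.tsum_mul_left]
            exact tsum_congr fun z => by ring
    have hsum : (∑' w, ∑' z,
        p x z * p z w * (μ z / V z ^ (n - 1)) * (μ w * (p w y / V w)))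
        ≤ 2 * Cstar * S := by
      calc (∑' w, ∑' z, p x z * p z w * (μ z / V z ^ (n - 1)) * (μ w * (p w y / V w)))
          ≤ ∑' w, ∑' z, (A z w + B z w) :=
            ENNReal.tsum_le_tsum fun w => ENNReal.tsum_le_tsum fun z => hpt z w
        _ = (∑' w, ∑' z, A z w) + (∑' w, ∑' z, B z w) := by
            simp only [ENNReal.tsum_add]
        _ ≤ Cstar * S + Cstar * S := add_le_add hAsum hBsum
        _ = 2 * Cstar * S := by ring
    calc fk p μ V (n + 1) x y
        = ∑' w, fk p μ V n x w * μ w * (p w y / V w) := rfl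
      _ ≤ ∑' w, (C * (∑' z, p x z * p z w * (μ z / V z ^ (n - 1)))) * μ w * (p w y / V w) := by
          refine ENNReal.tsum_le_tsum fun w => ?_
          gcongr
          exact IH x w
      _ = ∑' w, C * ∑' z, p x z * p z w * (μ z / V z ^ (n - 1)) * (μ w * (p w y / V w)) := by
          refine tsum_congr fun w => ?_
          rw [mul_assoc, mul_assoc, ← ENNReal.tsum_mul_right]
      _ = C * ∑' w, ∑' z, p x z * p z w * (μ z / V z ^ (n - 1)) * (μ w * (p w y / V w)) := by
          rw [ENNReal.tsum_mul_left]
      _ ≤ C * (2 * Cstar * S) := by gcongr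
      _ = (2 * Cstar) ^ (n + 1 - 2) * (V x)⁻¹ *
            (∑' z, p x z * p z y * (μ z / V z ^ (n + 1 - 1))) := by
          rw [hC, hS, show n + 1 - 2 = (n - 2) + 1 from by omega,
            show n + 1 - 1 = n from rfl, pow_succ]
          ring
end

section
/- Under DSP, duality and the ground state estimates $\phi_0(x)\asymp p(x,x_0)/V(x)$, $\widehat\phi_0(y)\asymp \widehat p(y,x_0)$ for a fixed $x_0$, the one-step intrinsic kernel is bounded below: there is $\delta>0$ such that $q_1(x,y)=\frac{p(x,y)}{\lambda_0 V(x)\phi_0(x)\widehat\phi_0(y)}\ge\delta$ for all $x,y\in X$. -/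
open scoped ENNReal

/-- under DSP, duality and the ground state estimates, the
one-step intrinsic kernel `q₁(x,y) = p(x,y)/(λ₀ V(x) φ₀(x) φ̂₀(y))` is bounded
below by a positive constant `δ`. -/
theorem intrinsic_kernel_lower_bound
    {X : Type*} [Countable X]
    (P Phat : X → X → ℝ≥0∞) (μ V : X → ℝ≥0∞) (x₀ : X)
    (hμpos : ∀ x, 0 < μ x) (hμfin : ∀ x, μ x < ∞)
    (hVpos : ∀ x, 0 < V x) (hVfin : ∀ x, V x < ∞)
    (hdual : ∀ x y, μ x * P x y = μ y * Phat y x)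
    (Cstar : ℝ≥0∞) (hCstar : 1 ≤ Cstar) (hCstarfin : Cstar < ∞)
    (hPpos : ∀ x y, 0 < P x y)
    (hdsp : ∀ x y, (∑' z, P x z * P z y) ≤ Cstar * P x y)
    (lam : ℝ≥0∞) (hlam : 0 < lam) (hlamfin : lam < ∞)
    (phi phihat : X → ℝ≥0∞)
    (hphipos : ∀ x, 0 < phi x) (hphifin : ∀ x, phi x < ∞)
    (hphihatpos : ∀ x, 0 < phihat x) (hphihatfin : ∀ x, phihat x < ∞)
    (hgs : ∃ c : ℝ≥0∞, 0 < c ∧ c < ∞ ∧ ∀ x,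
      c⁻¹ * ((P x x₀ / μ x₀) / V x) ≤ phi x ∧ phi x ≤ c * ((P x x₀ / μ x₀) / V x))
    (hgshat : ∃ c : ℝ≥0∞, 0 < c ∧ c < ∞ ∧ ∀ y,
      c⁻¹ * (Phat y x₀ / μ x₀) ≤ phihat y ∧ phihat y ≤ c * (Phat y x₀ / μ x₀)) :
    ∃ δ : ℝ≥0∞, 0 < δ ∧ ∀ x y,
      δ ≤ (P x y / μ y) / (lam * V x * phi x * phihat y) := by
  obtain ⟨c, hc0, hcfin, hgs⟩ := hgs
  obtain ⟨c', hc'0, hc'fin, hgshat⟩ := hgshat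
  have hK0 : lam * c * c' * Cstar ≠ 0 := by
    simp [hlam.ne', hc0.ne', hc'0.ne', (lt_of_lt_of_le one_pos hCstar).ne']
  have hKfin : lam * c * c' * Cstar ≠ ∞ :=
    ENNReal.mul_ne_top (ENNReal.mul_ne_top (ENNReal.mul_ne_top hlamfin.ne hcfin.ne)
      hc'fin.ne) hCstarfin.ne
  refine ⟨μ x₀ / (lam * c * c' * Cstar), ENNReal.div_pos (hμpos x₀).ne' hKfin, ?_⟩
  intro x y
  -- DSP single-term bound
  have h1 : P x x₀ * P x₀ y ≤ Cstar * P x y :=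
    le_trans (ENNReal.le_tsum x₀) (hdsp x y)
  -- bound on phi x * (V x * μ x₀)
  have h2 : phi x * (V x * μ x₀) ≤ c * P x x₀ := by
    calc phi x * (V x * μ x₀)
        ≤ (c * ((P x x₀ / μ x₀) / V x)) * (V x * μ x₀) :=
          mul_le_mul_left (hgs x).2 _
      _ = c * ((((P x x₀ / μ x₀) / V x) * V x) * μ x₀) := by ring
      _ = c * ((P x x₀ / μ x₀) * μ x₀) := by
          rw [ENNReal.div_mul_cancel (hVpos x).ne' (hVfin x).ne]
      _ = c * P x x₀ := by
          rw [ENNReal.div_mul_cancel (hμpos x₀).ne' (hμfin x₀).ne]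
  -- bound on phihat y * (μ x₀ * μ y), using duality
  have h3 : phihat y * (μ x₀ * μ y) ≤ c' * (μ x₀ * P x₀ y) := by
    calc phihat y * (μ x₀ * μ y)
        ≤ (c' * (Phat y x₀ / μ x₀)) * (μ x₀ * μ y) :=
          mul_le_mul_left (hgshat y).2 _
      _ = c' * (((Phat y x₀ / μ x₀) * μ x₀) * μ y) := by ring
      _ = c' * (Phat y x₀ * μ y) := by
          rw [ENNReal.div_mul_cancel (hμpos x₀).ne' (hμfin x₀).ne]
      _ = c' * (μ x₀ * P x₀ y) := by rw [mul_comm (Phat y x₀) (μ y), ← hdual]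
  have h4 : (phi x * (V x * μ x₀)) * (phihat y * (μ x₀ * μ y))
      ≤ (c * P x x₀) * (c' * (μ x₀ * P x₀ y)) := mul_le_mul' h2 h3
  -- denominators
  have hD0 : lam * V x * phi x * phihat y ≠ 0 := by
    simp [hlam.ne', (hVpos x).ne', (hphipos x).ne', (hphihatpos y).ne']
  have hDfin : lam * V x * phi x * phihat y ≠ ∞ :=
    ENNReal.mul_ne_top (ENNReal.mul_ne_top (ENNReal.mul_ne_top hlamfin.ne (hVfin x).ne)
      (hphifin x).ne) (hphihatfin y).ne
  rw [ENNReal.le_div_iff_mul_le (Or.inl hD0) (Or.inl hDfin),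
      ENNReal.le_div_iff_mul_le (Or.inl (hμpos y).ne') (Or.inl (hμfin y).ne)]
  have hrw : μ x₀ / (lam * c * c' * Cstar) * (lam * V x * phi x * phihat y) * μ y
      = (μ x₀ * (lam * V x * phi x * phihat y) * μ y) / (lam * c * c' * Cstar) := by
    rw [ENNReal.div_eq_inv_mul, ENNReal.div_eq_inv_mul]; ring
  rw [hrw, ENNReal.div_le_iff_le_mul (Or.inl hK0) (Or.inl hKfin)]
  rw [← ENNReal.mul_le_mul_iff_left (c := μ x₀) (hμpos x₀).ne' (hμfin x₀).ne]
  calc μ x₀ * (lam * V x * phi x * phihat y) * μ y * μ x₀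
      = lam * ((phi x * (V x * μ x₀)) * (phihat y * (μ x₀ * μ y))) := by ring
    _ ≤ lam * ((c * P x x₀) * (c' * (μ x₀ * P x₀ y))) := mul_le_mul_right h4 _
    _ = lam * (c * c' * μ x₀ * (P x x₀ * P x₀ y)) := by ring
    _ ≤ lam * (c * c' * μ x₀ * (Cstar * P x y)) := by
        exact mul_le_mul_right (mul_le_mul_right h1 _) _
    _ = P x y * (lam * c * c' * Cstar) * μ x₀ := by ring
end
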